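/- Let p ≥ 5 be prime and let c : Z_p → {R,Y,G,B} be a surjective rainbow Sidon free coloring such that: R is dominant, R is not 2-dominant, Y is 2-dominant, and the pattern YRB appears. Then the patterns BRB and GRG do not appear: there is no x ∈ Z_p with c(x) = c(x+2) = B and c(x+1) = R, and no x with c(x) = c(x+2) = G and c(x+1) = R. -/
import Mathlib


/-- `c` admits a rainbow solution to the Sidon equation `x₁ + x₂ = x₃ + x₄`:
a solution whose four colors are pairwise distinct. -/
def HasRainbowSidon {n : ℕ} {α : Type*} (c : ZMod n → α) : Prop :=
  ∃ x₁ x₂ x₃ x₄ : ZMod n, x₁ + x₂ = x₃ + x₄ ∧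
    c x₁ ≠ c x₂ ∧ c x₁ ≠ c x₃ ∧ c x₁ ≠ c x₄ ∧
    c x₂ ≠ c x₃ ∧ c x₂ ≠ c x₄ ∧ c x₃ ≠ c x₄

/-- The rainbow number `rb(ℤ_n, S)` of `ℤ_n` for the Sidon equation: the least `r > 0`
such that every exact (surjective) `r`-coloring of `ℤ_n` admits a rainbow Sidon solution.
(When no such `r` exists, `r = n + 1` belongs to the set vacuously, matching the
convention `rb(ℤ_n, S) = n + 1`.) -/
noncomputable def rbSidon (n : ℕ) : ℕ :=
  sInf {r : ℕ | 0 < r ∧ ∀ c : ZMod n → Fin r, Function.Surjective c → HasRainbowSidon c}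

/-- The four colors used in Section 2. -/
inductive Color : Type
  | R | Y | G | B
deriving DecidableEq

namespace NoBRBAux

/-- A non-R, non-Y color appearing at two consecutive positions propagates forward forever. -/
lemma mono_prop {p : ℕ} (c : ZMod p → Color) (C : Color) (hCR : C ≠ Color.R)
    (hCY : C ≠ Color.Y)
    (hRdom : ∀ x : ZMod p, c x = c (x + 1) ∨ c x = Color.R ∨ c (x + 1) = Color.R)
    (hY2dom : ∀ x : ZMod p, c x = c (x + 2) ∨ c x = Color.Y ∨ c (x + 2) = Color.Y)
    (v : ZMod p) (h0 : c v = C) (h1 : c (v + 1) = C) :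
    ∀ t : ℕ, c (v + t) = C := by
  have key : ∀ t : ℕ, c (v + t) = C ∧ c (v + t + 1) = C := by
    intro t
    induction t with
    | zero => simpa using ⟨h0, h1⟩
    | succ n ih =>
      obtain ⟨ha, hb⟩ := ih
      have h2 : c (v + (n : ZMod p) + 2) = C := by
        have e0 : v + (n : ZMod p) + 1 + 1 = v + (n : ZMod p) + 2 := by ring
        rcases hY2dom (v + (n : ZMod p)) with h | h | h
        · exact h.symm.trans ha
        · exact absurd (ha.symm.trans h) hCY
        · rcases hRdom (v + (n : ZMod p) + 1) with h' | h' | h'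
          · rw [e0] at h'
            exact absurd ((hb.symm.trans h').trans h) hCY
          · exact absurd (hb.symm.trans h') hCR
          · rw [e0] at h'
            exact absurd (h.symm.trans h') (by decide)
      have e1 : v + ((n + 1 : ℕ) : ZMod p) = v + (n : ZMod p) + 1 := by push_cast; ring
      have e2 : v + ((n + 1 : ℕ) : ZMod p) + 1 = v + (n : ZMod p) + 2 := by push_cast; ring
      exact ⟨by rw [e1]; exact hb, by rw [e2]; exact h2⟩
  exact fun t => (key t).1

end NoBRBAux

theorem no_BRB_GRG (p : ℕ) (hp : p.Prime) (hp5 : 5 ≤ p)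
    (c : ZMod p → Color) (hsurj : Function.Surjective c)
    (hfree : ¬ HasRainbowSidon c)
    (hRdom : ∀ x : ZMod p, c x = c (x + 1) ∨ c x = Color.R ∨ c (x + 1) = Color.R)
    (hRnot2dom : ¬ ∀ x : ZMod p, c x = c (x + 2) ∨ c x = Color.R ∨ c (x + 2) = Color.R)
    (hY2dom : ∀ x : ZMod p, c x = c (x + 2) ∨ c x = Color.Y ∨ c (x + 2) = Color.Y)
    (hYRB : ∃ j : ZMod p, c j = Color.Y ∧ c (j + 1) = Color.R ∧ c (j + 2) = Color.B)
    : ∀ x : ZMod p,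
      ¬ (c x = Color.B ∧ c (x + 1) = Color.R ∧ c (x + 2) = Color.B) ∧
      ¬ (c x = Color.G ∧ c (x + 1) = Color.R ∧ c (x + 2) = Color.G) := by
  classical
  haveI : NeZero p := ⟨by omega⟩
  haveI : Fact p.Prime := ⟨hp⟩
  obtain ⟨j, hy0, hjR, hb0⟩ := hYRB
  obtain ⟨g0, hg0⟩ := hsurj Color.G
  set y0 : ZMod p := j with hy0def
  set b0 : ZMod p := j + 2 with hb0def
  -- casting helper
  have reach : ∀ v z : ZMod p, v + (((z - v).val : ℕ) : ZMod p) = z := by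
    intro v z
    have h : (((z - v).val : ℕ) : ZMod p) = z - v := ZMod.natCast_rightInverse _
    rw [h]; ring
  -- the key consequence of rainbow-freeness
  have hstar : ∀ ρ γ β : ZMod p, c ρ = Color.R → c γ = Color.G → c β = Color.B →
      c (β + ρ - γ) ≠ Color.Y := by
    intro ρ γ β h1 h2 h3 h4
    exact hfree ⟨β, ρ, γ, β + ρ - γ, by ring, by rw [h1, h2, h3, h4]; decide⟩
  -- no two consecutive G's or B's
  have noCC : ∀ C : Color, C ≠ Color.R → C ≠ Color.Y →
      ∀ v : ZMod p, ¬ (c v = C ∧ c (v + 1) = C) := by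
    rintro C hCR hCY v ⟨h0, h1⟩
    have hall := NoBRBAux.mono_prop c C hCR hCY hRdom hY2dom v h0 h1 ((y0 - v).val)
    rw [reach v y0] at hall
    exact hCY (hall.symm.trans hy0)
  -- no two consecutive Y's
  have noYY : ∀ v : ZMod p, ¬ (c v = Color.Y ∧ c (v + 1) = Color.Y) := by
    rintro v ⟨h0, h1⟩
    set d : ZMod p := g0 - b0 with hd
    have hd0 : d ≠ 0 := by
      rw [hd, sub_ne_zero]
      intro h
      rw [h, hb0] at hg0
      exact Color.noConfusion hg0
    have hYshift : ∀ w : ZMod p, c w = Color.Y → c (w + d) ≠ Color.R := by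
      intro w hw hR
      have h := hstar (w + d) g0 b0 hR hg0 hb0
      rw [show b0 + (w + d) - g0 = w by rw [hd]; ring] at h
      exact h hw
    have key : ∀ t : ℕ, c (v + (t : ZMod p) * d) = Color.Y ∧
        c (v + (t : ZMod p) * d + 1) = Color.Y := by
      intro t
      induction t with
      | zero => simpa using ⟨h0, h1⟩
      | succ n ih =>
        obtain ⟨ha, hb⟩ := ih
        set w : ZMod p := v + (n : ZMod p) * d with hw
        have e1 : v + ((n + 1 : ℕ) : ZMod p) * d = w + d := by rw [hw]; push_cast; ring
        have e2 : v + ((n + 1 : ℕ) : ZMod p) * d + 1 = w + d + 1 := by rw [hw]; push_cast; ring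
        have hA : c (w + d) ≠ Color.R := hYshift w ha
        have hB : c (w + d + 1) ≠ Color.R := by
          have h := hYshift (w + 1) hb
          rw [show w + 1 + d = w + d + 1 by ring] at h
          exact h
        have heq : c (w + d) = c (w + d + 1) := by
          rcases hRdom (w + d) with h | h | h
          · exact h
          · exact absurd h hA
          · exact absurd h hB
        rw [e1]
        cases hcol : c (w + d) with
        | R => exact absurd hcol hA
        | Y => exact ⟨rfl, heq.symm.trans hcol⟩
        | G =>
          exact absurd ⟨hcol, heq.symm.trans hcol⟩ (noCC Color.G (by decide) (by decide) (w + d))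
        | B =>
          exact absurd ⟨hcol, heq.symm.trans hcol⟩ (noCC Color.B (by decide) (by decide) (w + d))
    -- coverage: the orbit of v under +d hits g0
    have hcast : ((((g0 - v) * d⁻¹).val : ℕ) : ZMod p) = (g0 - v) * d⁻¹ :=
      ZMod.natCast_rightInverse _
    have hk := (key (((g0 - v) * d⁻¹).val)).1
    rw [hcast] at hk
    rw [show v + (g0 - v) * d⁻¹ * d = g0 by
      rw [mul_assoc, inv_mul_cancel₀ hd0, mul_one]; ring] at hk
    rw [hg0] at hk
    exact Color.noConfusion hk
  -- non-R positions are independent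
  have hindep : ∀ v : ZMod p, c v = Color.R ∨ c (v + 1) = Color.R := by
    intro v
    by_contra hcon
    push_neg at hcon
    obtain ⟨hv, hv1⟩ := hcon
    have heq : c v = c (v + 1) := by
      rcases hRdom v with h | h | h
      · exact h
      · exact absurd h hv
      · exact absurd h hv1
    cases hcv : c v with
    | R => exact hv hcv
    | Y => exact noYY v ⟨hcv, heq.symm.trans hcv⟩
    | G => exact noCC Color.G (by decide) (by decide) v ⟨hcv, heq.symm.trans hcv⟩
    | B => exact noCC Color.B (by decide) (by decide) v ⟨hcv, heq.symm.trans hcv⟩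
  -- there exist two R's at distance 2
  have hRR : ∃ r : ZMod p, c r = Color.R ∧ c (r + 2) = Color.R := by
    by_contra hno
    push_neg at hno
    set Rs : Finset (ZMod p) := Finset.univ.filter (fun x => c x = Color.R) with hRsdef
    set Ss : Finset (ZMod p) := Finset.univ.filter (fun x => ¬ c x = Color.R) with hSsdef
    have hcard : Rs.card + Ss.card = p := by
      rw [hRsdef, hSsdef, Finset.card_filter_add_card_filter_not, Finset.card_univ,
        ZMod.card]
    have hdisj1 : Disjoint Rs (Rs.image (fun x => x + 2)) := by
      rw [Finset.disjoint_left]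
      intro a ha hb
      rw [hRsdef, Finset.mem_filter] at ha
      obtain ⟨y, hy, hy2⟩ := Finset.mem_image.mp hb
      rw [hRsdef, Finset.mem_filter] at hy
      exact hno y hy.2 (by rw [hy2]; exact ha.2)
    have h1 : 2 * Rs.card ≤ p := by
      have hu := Finset.card_union_of_disjoint hdisj1
      have hle : (Rs ∪ Rs.image (fun x => x + 2)).card ≤ p := by
        refine le_trans (Finset.card_le_card (Finset.subset_univ _)) ?_
        rw [Finset.card_univ, ZMod.card]
      rw [hu, Finset.card_image_of_injective _ (add_left_injective (2 : ZMod p))] at hle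
      omega
    have hdisj2 : Disjoint Ss (Ss.image (fun x => x + 1)) := by
      rw [Finset.disjoint_left]
      intro a ha hb
      rw [hSsdef, Finset.mem_filter] at ha
      obtain ⟨y, hy, hy1⟩ := Finset.mem_image.mp hb
      rw [hSsdef, Finset.mem_filter] at hy
      rcases hindep y with h | h
      · exact hy.2 h
      · exact ha.2 (by rw [← hy1]; exact h)
    have h2 : 2 * Ss.card ≤ p := by
      have hu := Finset.card_union_of_disjoint hdisj2
      have hle : (Ss ∪ Ss.image (fun x => x + 1)).card ≤ p := by
        refine le_trans (Finset.card_le_card (Finset.subset_univ _)) ?_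
        rw [Finset.card_univ, ZMod.card]
      rw [hu, Finset.card_image_of_injective _ (add_left_injective (1 : ZMod p))] at hle
      omega
    have hodd : p % 2 = 1 := Nat.odd_iff.mp (hp.odd_of_ne_two (by omega))
    omega
  obtain ⟨r0, hr0, hr0'⟩ := hRR
  -- decomposition of m into bounded parts
  have decomp : ∀ (m a b e : ℕ), m < a + b + e + 1 →
      ∃ i j k, i ≤ a ∧ j ≤ b ∧ k ≤ e ∧ i + j + k = m := by
    intro m a b e hm
    exact ⟨min m a, min (m - min m a) b, m - min m a - min (m - min m a) b,
      by omega, by omega, by omega, by omega⟩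
  -- the expansion step: three intervals produce a long Y-free monochromatic interval
  have expand : ∀ (na nb nc : ℕ) (ar ag ab : ZMod p),
      1 ≤ na → 1 ≤ nb → 1 ≤ nc →
      (∀ i : ℕ, i < na → c (ar + 2 * i) = Color.R) →
      (∀ i : ℕ, i < nb → c (ag + 2 * i) = Color.G) →
      (∀ i : ℕ, i < nc → c (ab + 2 * i) = Color.B) →
      ∃ u : ZMod p, (∀ m : ℕ, m < na + nb + nc - 2 → c (u + 2 * m) ≠ Color.Y) ∧
        (∀ m : ℕ, m < na + nb + nc - 2 → c (u + 2 * m) = c u) := by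
    intro na nb nc ar ag ab hna hnb hnc hR hG hB
    set s : ℕ := na + nb + nc - 2 with hs
    set U : ZMod p := ar + ab - ag - 2 * ((nb - 1 : ℕ) : ZMod p) with hU
    have hYfree : ∀ m : ℕ, m < s → c (U + 2 * m) ≠ Color.Y := by
      intro m hm
      obtain ⟨i, jj, k, hi, hj, hk, hijk⟩ := decomp m (na - 1) (nb - 1) (nc - 1) (by omega)
      have hcast : ((nb - 1 - jj : ℕ) : ZMod p) = ((nb - 1 : ℕ) : ZMod p) - (jj : ZMod p) := by
        rw [Nat.cast_sub hj]
      have hpos : ab + 2 * (k : ZMod p) + (ar + 2 * (i : ZMod p)) -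
          (ag + 2 * ((nb - 1 - jj : ℕ) : ZMod p)) = U + 2 * (m : ZMod p) := by
        rw [hcast, hU, ← hijk]; push_cast; ring
      have h := hstar (ar + 2 * i) (ag + 2 * ((nb - 1 - jj : ℕ) : ZMod p)) (ab + 2 * k)
        (hR i (by omega)) (hG (nb - 1 - jj) (by omega)) (hB k (by omega))
      rw [hpos] at h
      exact h
    have hmono : ∀ m : ℕ, m < s → c (U + 2 * m) = c U := by
      intro m hm
      induction m with
      | zero => simp
      | succ n ih =>
        have hn : n < s := by omega
        have e : U + 2 * ((n + 1 : ℕ) : ZMod p) = U + 2 * (n : ZMod p) + 2 := by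
          push_cast; ring
        rcases hY2dom (U + 2 * (n : ZMod p)) with h | h | h
        · rw [e]
          exact h.symm.trans (ih hn)
        · exact absurd h (hYfree n hn)
        · exfalso
          apply hYfree (n + 1) hm
          rw [e]
          exact h
    exact ⟨U, hYfree, hmono⟩
  -- Y appears somewhere
  have hy0' : c y0 = Color.Y := hy0
  -- the main contradiction, given G- and B-intervals with total length ≥ 3
  have main : ∀ (nb nc : ℕ) (ag ab : ZMod p), 1 ≤ nb → 1 ≤ nc → 3 ≤ nb + nc →
      (∀ i : ℕ, i < nb → c (ag + 2 * i) = Color.G) →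
      (∀ i : ℕ, i < nc → c (ab + 2 * i) = Color.B) → False := by
    intro nb0 nc0 ag0 ab0 hnb0 hnc0 h3 hG0 hB0
    have grow : ∀ n : ℕ, ∃ (na nb nc : ℕ) (ar ag ab : ZMod p),
        2 ≤ na ∧ 1 ≤ nb ∧ 1 ≤ nc ∧ 3 ≤ nb + nc ∧ n ≤ na + nb + nc ∧
        (∀ i : ℕ, i < na → c (ar + 2 * i) = Color.R) ∧
        (∀ i : ℕ, i < nb → c (ag + 2 * i) = Color.G) ∧
        (∀ i : ℕ, i < nc → c (ab + 2 * i) = Color.B) := by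
      intro n
      induction n with
      | zero =>
        refine ⟨2, nb0, nc0, r0, ag0, ab0, le_refl 2, hnb0, hnc0, h3, by omega, ?_, hG0, hB0⟩
        intro i hi
        interval_cases i
        · simpa using hr0
        · rw [show r0 + 2 * ((1 : ℕ) : ZMod p) = r0 + 2 by push_cast; ring]
          exact hr0'
      | succ n ih =>
        obtain ⟨na, nb, nc, ar, ag, ab, h2a, h1b, h1c, h3bc, hsum, hR, hG, hB⟩ := ih
        obtain ⟨u, hYf, hmono⟩ := expand na nb nc ar ag ab (by omega) h1b h1c hR hG hB
        have hu0 : c u ≠ Color.Y := by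
          have h := hYf 0 (by omega)
          simpa using h
        cases hcu : c u with
        | Y => exact absurd hcu hu0
        | R =>
          refine ⟨na + nb + nc - 2, nb, nc, u, ag, ab, by omega, h1b, h1c, h3bc, by omega,
            ?_, hG, hB⟩
          intro i hi
          rw [hmono i hi, hcu]
        | G =>
          refine ⟨na, na + nb + nc - 2, nc, ar, u, ab, h2a, by omega, h1c, by omega, by omega,
            hR, ?_, hB⟩
          intro i hi
          rw [hmono i hi, hcu]
        | B =>
          refine ⟨na, nb, na + nb + nc - 2, ar, ag, u, h2a, h1b, by omega, by omega, by omega,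
            hR, hG, ?_⟩
          intro i hi
          rw [hmono i hi, hcu]
    obtain ⟨na, nb, nc, ar, ag, ab, h2a, h1b, h1c, h3bc, hsum, hR, hG, hB⟩ := grow (p + 2)
    obtain ⟨u, hYf, -⟩ := expand na nb nc ar ag ab (by omega) h1b h1c hR hG hB
    have h2ne : (2 : ZMod p) ≠ 0 := by
      have h : ((2 : ℕ) : ZMod p) ≠ 0 := by
        rw [Ne, ZMod.natCast_eq_zero_iff]
        intro hdvd
        have := Nat.le_of_dvd (by norm_num) hdvd
        omega
      simpa using h
    set m₀ : ℕ := ((y0 - u) * (2 : ZMod p)⁻¹).val with hm₀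
    have hm0lt : m₀ < p := ZMod.val_lt _
    have hcast : ((m₀ : ℕ) : ZMod p) = (y0 - u) * (2 : ZMod p)⁻¹ :=
      ZMod.natCast_rightInverse _
    have he : (2 : ZMod p) * ((y0 - u) * (2 : ZMod p)⁻¹) = y0 - u := by
      rw [mul_comm, mul_assoc, inv_mul_cancel₀ h2ne, mul_one]
    have heq : u + 2 * ((m₀ : ℕ) : ZMod p) = y0 := by
      rw [hcast, he]; ring
    apply hYf m₀ (by omega)
    rw [heq]
    exact hy0'
  -- conclude
  intro x
  constructor
  · rintro ⟨hxB, -, hxB2⟩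
    apply main 1 2 g0 x (le_refl 1) (by norm_num) (by norm_num)
    · intro i hi
      interval_cases i
      simpa using hg0
    · intro i hi
      interval_cases i
      · simpa using hxB
      · rw [show x + 2 * ((1 : ℕ) : ZMod p) = x + 2 by push_cast; ring]
        exact hxB2
  · rintro ⟨hxG, -, hxG2⟩
    apply main 2 1 x b0 (by norm_num) (le_refl 1) (by norm_num)
    · intro i hi
      interval_cases i
      · simpa using hxG
      · rw [show x + 2 * ((1 : ℕ) : ZMod p) = x + 2 by push_cast; ring]
        exact hxG2
    · intro i hi
      interval_cases i
      simpa using hb0
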